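/- For any continuous surjective self-map T of a compact metric space X, h̃*(T) = h*(T): the topological tail entropy defined via continuous partitions of unity equals Misiurewicz's topological tail entropy. -/

import Mathlib

open MeasureTheory Filter Set

/-! ### Partitions of unity -/

/-- A finite partition of unity on `X`: a finite family of functions `X → [0,1]`
summing to `1` everywhere. -/
structure PartUnity (X : Type*) where
  n : ℕ
  f : Fin n → X → ℝ
  nonneg : ∀ i x, 0 ≤ f i x
  le_one : ∀ i x, f i x ≤ 1
  sum_one : ∀ x, ∑ i, f i x = 1

namespace PartUnity

variable {X Y : Type*}

/-- A continuous partition of unity. -/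
def Cont [TopologicalSpace X] (Φ : PartUnity X) : Prop := ∀ i, Continuous (Φ.f i)

/-- A measurable partition of unity. -/
def Meas [MeasurableSpace X] (Φ : PartUnity X) : Prop := ∀ i, Measurable (Φ.f i)

/-- A positive partition of unity. -/
def Pos (Φ : PartUnity X) : Prop := ∀ i x, 0 < Φ.f i x

/-- The join `Φ ∨ Ψ = {φ·ψ : φ ∈ Φ, ψ ∈ Ψ}` of two partitions of unity. -/
def join (Φ Ψ : PartUnity X) : PartUnity X where
  n := Φ.n * Ψ.n
  f k x := Φ.f (finProdFinEquiv.symm k).1 x * Ψ.f (finProdFinEquiv.symm k).2 x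
  nonneg k x := mul_nonneg (Φ.nonneg _ x) (Ψ.nonneg _ x)
  le_one k x := mul_le_one₀ (Φ.le_one _ x) (Ψ.nonneg _ x) (Ψ.le_one _ x)
  sum_one x := by
    rw [← Equiv.sum_comp (finProdFinEquiv : Fin Φ.n × Fin Ψ.n ≃ Fin (Φ.n * Ψ.n))
      (fun k => Φ.f (finProdFinEquiv.symm k).1 x * Ψ.f (finProdFinEquiv.symm k).2 x)]
    simp only [Equiv.symm_apply_apply]
    rw [Fintype.sum_prod_type]
    dsimp only
    rw [← Finset.sum_mul_sum, Φ.sum_one x, Ψ.sum_one x, one_mul]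

/-- Pull back a partition of unity by a map: `TΦ = {φ ∘ T : φ ∈ Φ}`. -/
def comp (Φ : PartUnity X) (T : Y → X) : PartUnity Y where
  n := Φ.n
  f i y := Φ.f i (T y)
  nonneg i y := Φ.nonneg i (T y)
  le_one i y := Φ.le_one i (T y)
  sum_one y := Φ.sum_one (T y)

/-- The trivial partition of unity `{1}`. -/
def triv (X : Type*) : PartUnity X where
  n := 1
  f _ _ := 1
  nonneg _ _ := zero_le_one
  le_one _ _ := le_rfl
  sum_one _ := by simp

/-- `dyn T Φ n` is the dynamical join `Φ₀ⁿ⁻¹ = ⋁_{i=0}^{n-1} TⁱΦ`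
(joined with a harmless trivial factor). -/
def dyn (T : X → X) (Φ : PartUnity X) : ℕ → PartUnity X
  | 0 => triv X
  | n + 1 => Φ.join ((dyn T Φ n).comp T)

/-- The product partition of unity `Φ ⊗ Ψ` on `X × Y`. -/
def prod (Φ : PartUnity X) (Ψ : PartUnity Y) : PartUnity (X × Y) where
  n := Φ.n * Ψ.n
  f k p := Φ.f (finProdFinEquiv.symm k).1 p.1 * Ψ.f (finProdFinEquiv.symm k).2 p.2
  nonneg k p := mul_nonneg (Φ.nonneg _ _) (Ψ.nonneg _ _)
  le_one k p := mul_le_one₀ (Φ.le_one _ _) (Ψ.nonneg _ _) (Ψ.le_one _ _)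
  sum_one p := by
    rw [← Equiv.sum_comp (finProdFinEquiv : Fin Φ.n × Fin Ψ.n ≃ Fin (Φ.n * Ψ.n))
      (fun k => Φ.f (finProdFinEquiv.symm k).1 p.1 * Ψ.f (finProdFinEquiv.symm k).2 p.2)]
    simp only [Equiv.symm_apply_apply]
    rw [Fintype.sum_prod_type]
    dsimp only
    rw [← Finset.sum_mul_sum, Φ.sum_one p.1, Ψ.sum_one p.2, one_mul]

/-- The diameter of a partition of unity: the maximum of the diameters of the
supports of its members. -/
noncomputable def diam [PseudoMetricSpace X] (Φ : PartUnity X) : ℝ :=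
  ⨆ i, Metric.diam (tsupport (Φ.f i))

end PartUnity

/-! ### Metric entropy via partitions of unity -/

variable {X Y : Type*}

/-- The static entropy `H̃_μ(Φ) = Σ_φ ( −μ(φ) log μ(φ) + μ(φ log φ) )`. -/
noncomputable def statEnt [MeasurableSpace X] (μ : Measure X) (Φ : PartUnity X) : ℝ :=
  ∑ i, (-((∫ x, Φ.f i x ∂μ) * Real.log (∫ x, Φ.f i x ∂μ)) +
    ∫ x, Φ.f i x * Real.log (Φ.f i x) ∂μ)

/-- The conditional measure `μ_ψ`, determined by `μ_ψ(φ) = μ(φψ)/μ(ψ)`. -/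
noncomputable def condMeas [MeasurableSpace X] (μ : Measure X) (ψ : X → ℝ) : Measure X :=
  (ENNReal.ofReal (∫ x, ψ x ∂μ))⁻¹ • μ.withDensity (fun x => ENNReal.ofReal (ψ x))

/-- The conditional static entropy `H̃_μ(Φ | Ψ) = Σ_ψ μ(ψ) H̃_{μ_ψ}(Φ)`
(terms with `μ(ψ) = 0` vanish since they are multiplied by `μ(ψ) = 0`). -/
noncomputable def condStatEnt [MeasurableSpace X] (μ : Measure X) (Φ Ψ : PartUnity X) : ℝ :=
  ∑ j, (∫ x, Ψ.f j x ∂μ) * statEnt (condMeas μ (Ψ.f j)) Φ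

/-- The local metric entropy `h̃_μ(T,Φ) = lim_n H̃_μ(Φ₀ⁿ⁻¹)/n`. -/
noncomputable def locEnt [MeasurableSpace X] (T : X → X) (μ : Measure X) (Φ : PartUnity X) : ℝ :=
  Filter.atTop.limsup fun n : ℕ => statEnt μ (PartUnity.dyn T Φ n) / (n : ℝ)

/-- The local conditional metric entropy `h̃_μ(T,Φ|Ψ) = lim_n H̃_μ(Φ₀ⁿ⁻¹|Ψ₀ⁿ⁻¹)/n`. -/
noncomputable def condLocEnt [MeasurableSpace X] (T : X → X) (μ : Measure X)
    (Φ Ψ : PartUnity X) : ℝ :=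
  Filter.atTop.limsup fun n : ℕ =>
    condStatEnt μ (PartUnity.dyn T Φ n) (PartUnity.dyn T Ψ n) / (n : ℝ)

/-- The metric entropy `h̃_μ(T)`: supremum of `h̃_μ(T,Φ)` over continuous
partitions of unity. -/
noncomputable def metEnt [TopologicalSpace X] [MeasurableSpace X]
    (T : X → X) (μ : Measure X) : EReal :=
  ⨆ Φ : {Φ : PartUnity X // Φ.Cont}, ((locEnt T μ Φ.1 : ℝ) : EReal)

/-! ### Topological entropy via partitions of unity -/

/-- The topological static entropy `H̃(Φ) = Σ_φ sup φ`. -/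
noncomputable def topStat (Φ : PartUnity X) : ℝ := ∑ i, ⨆ x, Φ.f i x

/-- The local topological entropy `h̃(T,Φ) = lim_n (1/n) log H̃(Φ₀ⁿ⁻¹)`. -/
noncomputable def topLocEnt (T : X → X) (Φ : PartUnity X) : ℝ :=
  Filter.atTop.limsup fun n : ℕ => Real.log (topStat (PartUnity.dyn T Φ n)) / (n : ℝ)

/-- The topological entropy `h̃_top(T)`: supremum of `h̃(T,Φ)` over continuous
partitions of unity. -/
noncomputable def topEnt [TopologicalSpace X] (T : X → X) : EReal :=
  ⨆ Φ : {Φ : PartUnity X // Φ.Cont}, ((topLocEnt T Φ.1 : ℝ) : EReal)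

/-! ### Classical Kolmogorov–Sinai entropy -/

/-- A finite Borel partition of `X` (indexed; atoms may be empty). -/
structure FinBorelPart (X : Type*) [MeasurableSpace X] where
  n : ℕ
  A : Fin n → Set X
  meas : ∀ i, MeasurableSet (A i)
  disj : ∀ i j, i ≠ j → Disjoint (A i) (A j)
  cover : ⋃ i, A i = Set.univ

/-- Local Kolmogorov–Sinai entropy `h_μ(T,𝒜) = lim_n (1/n) Σ_{A ∈ 𝒜₀ⁿ⁻¹} −μ(A) log μ(A)`. -/
noncomputable def ksLocEnt [MeasurableSpace X] (T : X → X) (μ : Measure X)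
    (P : FinBorelPart X) : ℝ :=
  Filter.atTop.limsup fun n : ℕ =>
    (∑ σ : Fin n → Fin P.n,
      Real.negMulLog (μ (⋂ i : Fin n, T^[(i : ℕ)] ⁻¹' P.A (σ i))).toReal) / (n : ℝ)

/-- The Kolmogorov–Sinai metric entropy `h_μ(T)`. -/
noncomputable def ksEnt [MeasurableSpace X] (T : X → X) (μ : Measure X) : EReal :=
  ⨆ P : FinBorelPart X, ((ksLocEnt T μ P : ℝ) : EReal)

/-! ### Classical topological entropy via open covers -/

/-- A finite open cover of `X`. -/
structure FinOpenCover (X : Type*) [TopologicalSpace X] where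
  n : ℕ
  U : Fin n → Set X
  opn : ∀ i, IsOpen (U i)
  cov : ⋃ i, U i = Set.univ

/-- The member `⋂_{i<n} T^{-i} U_{σ(i)}` of the dynamical refinement of a cover. -/
def dynSet (T : X → X) {m : ℕ} (U : Fin m → Set X) (n : ℕ) (σ : Fin n → Fin m) : Set X :=
  ⋂ i : Fin n, T^[(i : ℕ)] ⁻¹' U (σ i)

/-- Minimal cardinality of a subfamily of `V` covering `S`. -/
noncomputable def coverNum {α : Type*} [Fintype α] (V : α → Set X) (S : Set X) : ℕ :=
  sInf {k | ∃ t : Finset α, t.card = k ∧ S ⊆ ⋃ i ∈ t, V i}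

/-- The local classical topological entropy `h(T,𝒰)` of an open cover. -/
noncomputable def covLocEnt [TopologicalSpace X] (T : X → X) (C : FinOpenCover X) : ℝ :=
  Filter.atTop.limsup fun n : ℕ =>
    Real.log ((coverNum (fun σ : Fin n → Fin C.n => dynSet T C.U n σ) Set.univ : ℕ) : ℝ) / (n : ℝ)

/-- The classical topological entropy `h_top(T)` via open covers. -/
noncomputable def topEntCov [TopologicalSpace X] (T : X → X) : EReal :=
  ⨆ C : FinOpenCover X, ((covLocEnt T C : ℝ) : EReal)

/-! ### Misiurewicz topological tail entropy -/

/-- The local conditional topological entropy `h(𝒰|𝒱)` of two open covers. -/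
noncomputable def misCondLoc [TopologicalSpace X] (T : X → X) (CU CV : FinOpenCover X) : ℝ :=
  Filter.atTop.limsup fun n : ℕ =>
    Real.log (((⨆ τ : Fin n → Fin CV.n,
      coverNum (fun σ : Fin n → Fin CU.n => dynSet T CU.U n σ) (dynSet T CV.U n τ) : ℕ)) : ℝ) / (n : ℝ)

/-- The conditional topological entropy `h(T|𝒱) = sup_𝒰 h(𝒰|𝒱)`. -/
noncomputable def misCond [TopologicalSpace X] (T : X → X) (CV : FinOpenCover X) : EReal :=
  ⨆ CU : FinOpenCover X, ((misCondLoc T CU CV : ℝ) : EReal)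

/-- Misiurewicz's topological tail entropy `h*(T) = inf_𝒱 h(T|𝒱)`. -/
noncomputable def misTail [TopologicalSpace X] (T : X → X) : EReal :=
  ⨅ CV : FinOpenCover X, misCond T CV

/-! ### Topological tail entropy via partitions of unity -/

/-- `H̃(Φ|ψ) = Σ_φ sup_{supp ψ} φ`. -/
noncomputable def condTopStatPU [TopologicalSpace X] (Φ : PartUnity X) (ψ : X → ℝ) : ℝ :=
  ∑ i, ⨆ x ∈ tsupport ψ, Φ.f i x

/-- The weight set `D(Ψ) = {a : inf ψ ≤ a_ψ ≤ sup ψ, Σ a_ψ = 1}`. -/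
def weights (Ψ : PartUnity X) : Set (Fin Ψ.n → ℝ) :=
  {a | (∀ j, (⨅ x, Ψ.f j x) ≤ a j ∧ a j ≤ ⨆ x, Ψ.f j x) ∧ ∑ j, a j = 1}

/-- `H̃_n(Φ|Ψ) = sup_{a ∈ D(Ψ₀ⁿ⁻¹)} Σ_ψ a_ψ H̃(Φ₀ⁿ⁻¹|ψ)`. -/
noncomputable def tailStat [TopologicalSpace X] (T : X → X) (Φ Ψ : PartUnity X) (n : ℕ) : ℝ :=
  sSup {r | ∃ a ∈ weights (PartUnity.dyn T Ψ n),
    r = ∑ j, a j * condTopStatPU (PartUnity.dyn T Φ n) ((PartUnity.dyn T Ψ n).f j)}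

/-- The local conditional topological entropy `h̃(Φ|Ψ) = limsup_n (1/n) log H̃_n(Φ|Ψ)`. -/
noncomputable def tailLoc [TopologicalSpace X] (T : X → X) (Φ Ψ : PartUnity X) : ℝ :=
  Filter.atTop.limsup fun n : ℕ => Real.log (tailStat T Φ Ψ n) / (n : ℝ)

/-- The conditional topological entropy `h̃(T|Ψ) = sup_Φ h̃(Φ|Ψ)` over continuous `Φ`. -/
noncomputable def condTopEntPU [TopologicalSpace X] (T : X → X) (Ψ : PartUnity X) : EReal :=
  ⨆ Φ : {Φ : PartUnity X // Φ.Cont}, ((tailLoc T Φ.1 Ψ : ℝ) : EReal)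

/-- The topological tail entropy `h̃*(T) = inf_Ψ h̃(T|Ψ)` over continuous `Ψ`. -/
noncomputable def tailEntPU [TopologicalSpace X] (T : X → X) : EReal :=
  ⨅ Ψ : {Ψ : PartUnity X // Ψ.Cont}, condTopEntPU T Ψ.1

/-! ### Pressures -/

/-- The Birkhoff sum `S_n g = Σ_{i<n} g ∘ Tⁱ`. -/
def birkhoff (T : X → X) (g : X → ℝ) (n : ℕ) (x : X) : ℝ :=
  ∑ i ∈ Finset.range n, g (T^[i] x)

/-- The static pressure `P̃(T,g,Φ,n) = Σ_{φ ∈ Φ₀ⁿ⁻¹} sup (φ e^{S_n g})`. -/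
noncomputable def puPressStat (T : X → X) (g : X → ℝ) (Φ : PartUnity X) (n : ℕ) : ℝ :=
  ∑ i, ⨆ x, (PartUnity.dyn T Φ n).f i x * Real.exp (birkhoff T g n x)

/-- The local topological pressure `P̃_top(T,g,Φ) = lim_n (1/n) log P̃(T,g,Φ,n)`. -/
noncomputable def puLocPress (T : X → X) (g : X → ℝ) (Φ : PartUnity X) : ℝ :=
  Filter.atTop.limsup fun n : ℕ => Real.log (puPressStat T g Φ n) / (n : ℝ)

/-- The topological pressure `P̃_top(T,g)` via continuous partitions of unity. -/
noncomputable def puTopPress [TopologicalSpace X] (T : X → X) (g : X → ℝ) : EReal :=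
  ⨆ Φ : {Φ : PartUnity X // Φ.Cont}, ((puLocPress T g Φ.1 : ℝ) : EReal)

/-- The classical static pressure of an open cover:
`inf { Σ_{V ∈ 𝒱} sup_V e^{S_n g} : 𝒱 a subcover of 𝒰₀ⁿ⁻¹ }`. -/
noncomputable def covPressStat [TopologicalSpace X] (T : X → X) (g : X → ℝ)
    (C : FinOpenCover X) (n : ℕ) : ℝ :=
  sInf {r | ∃ t : Finset (Fin n → Fin C.n),
    (Set.univ ⊆ ⋃ σ ∈ t, dynSet T C.U n σ) ∧
    r = ∑ σ ∈ t, ⨆ x ∈ dynSet T C.U n σ, Real.exp (birkhoff T g n x)}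

/-- The local classical topological pressure of an open cover. -/
noncomputable def covLocPress [TopologicalSpace X] (T : X → X) (g : X → ℝ)
    (C : FinOpenCover X) : ℝ :=
  Filter.atTop.limsup fun n : ℕ => Real.log (covPressStat T g C n) / (n : ℝ)

/-- The classical topological pressure `P_top(T,g)` via open covers. -/
noncomputable def topPress [TopologicalSpace X] (T : X → X) (g : X → ℝ) : EReal :=
  ⨆ C : FinOpenCover X, ((covLocPress T g C : ℝ) : EReal)

/-! ### Topological tail pressure -/

/-- `P̃_n(T,g,Φ|Ψ) = sup_{a ∈ D(Ψ₀ⁿ⁻¹)} Σ_ψ a_ψ Σ_φ sup_{supp ψ} (φ e^{S_n g})`. -/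
noncomputable def tailPressStat [TopologicalSpace X] (T : X → X) (g : X → ℝ)
    (Φ Ψ : PartUnity X) (n : ℕ) : ℝ :=
  sSup {r | ∃ a ∈ weights (PartUnity.dyn T Ψ n),
    r = ∑ j, a j * ∑ i, ⨆ x ∈ tsupport ((PartUnity.dyn T Ψ n).f j),
      (PartUnity.dyn T Φ n).f i x * Real.exp (birkhoff T g n x)}

/-- The local topological tail pressure `P̃(T,g,Φ|Ψ) = limsup_n (1/n) log P̃_n(T,g,Φ|Ψ)`. -/
noncomputable def tailLocPress [TopologicalSpace X] (T : X → X) (g : X → ℝ)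
    (Φ Ψ : PartUnity X) : ℝ :=
  Filter.atTop.limsup fun n : ℕ => Real.log (tailPressStat T g Φ Ψ n) / (n : ℝ)

/-- The conditional topological pressure `P̃(T,g|Ψ) = sup_Φ P̃(T,g,Φ|Ψ)` over continuous `Φ`. -/
noncomputable def condTopPressPU [TopologicalSpace X] (T : X → X) (g : X → ℝ)
    (Ψ : PartUnity X) : EReal :=
  ⨆ Φ : {Φ : PartUnity X // Φ.Cont}, ((tailLocPress T g Φ.1 Ψ : ℝ) : EReal)

/-- The topological tail pressure `P̃*(T,g) = inf_Ψ P̃(T,g|Ψ)` over continuous `Ψ`. -/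
noncomputable def puTailPress [TopologicalSpace X] (T : X → X) (g : X → ℝ) : EReal :=
  ⨅ Ψ : {Ψ : PartUnity X // Ψ.Cont}, condTopPressPU T g Ψ.1

/-! ### Classical topological tail pressure (Li–Chen–Cheng) -/

/-- The Bowen ball `B(x,ε,n) = {y : d(Tⁱx,Tⁱy) < ε for all 0 ≤ i < n}`. -/
def bowenBall [PseudoMetricSpace X] (T : X → X) (x : X) (ε : ℝ) (n : ℕ) : Set X :=
  {y | ∀ i < n, dist (T^[i] x) (T^[i] y) < ε}

/-- `E` is `(n,δ)`-separated: distinct points `y,z ∈ E` satisfy `d(Tⁱy,Tⁱz) > δ`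
for some `0 ≤ i < n`. -/
def IsSep [PseudoMetricSpace X] (T : X → X) (n : ℕ) (δ : ℝ) (E : Finset X) : Prop :=
  ∀ y ∈ E, ∀ z ∈ E, y ≠ z → ∃ i < n, δ < dist (T^[i] y) (T^[i] z)

/-- `P_n(T,g,δ,ε) = sup_x sup { Σ_{y∈E} e^{S_n g(y)} : E (n,δ)-separated ⊆ B(x,ε,n) }`. -/
noncomputable def sepPress [PseudoMetricSpace X] (T : X → X) (g : X → ℝ)
    (n : ℕ) (δ ε : ℝ) : ℝ :=
  ⨆ x : X, sSup {r | ∃ E : Finset X, ↑E ⊆ bowenBall T x ε n ∧ IsSep T n δ E ∧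
    r = ∑ y ∈ E, Real.exp (birkhoff T g n y)}

/-- The classical topological tail pressure
`P*(T,g) = lim_{ε→0} lim_{δ→0} limsup_n (1/n) log P_n(T,g,δ,ε)`
(the inner limits are monotone, hence given by `inf_ε sup_δ`). -/
noncomputable def tailPress [PseudoMetricSpace X] (T : X → X) (g : X → ℝ) : EReal :=
  ⨅ ε : {ε : ℝ // 0 < ε}, ⨆ δ : {δ : ℝ // 0 < δ},
    Filter.atTop.limsup fun n : ℕ => ((Real.log (sepPress T g n δ.1 ε.1) / (n : ℝ) : ℝ) : EReal)

/-!
Both inequalities compare the two counting quantities at each time `n` up to a factor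
exponential in `n` with an arbitrarily small rate.

For `h̃* ≤ h*`: given a cover `𝒱`, take `Ψ` subordinate to `𝒱`; given `Φ`, take a cover `𝒰`
on whose members every `φ ∈ Φ` oscillates by at most `ε`. On a cell of `𝒰₀ⁿ⁻¹` through `x₀`
each member `∏ₖ φ_{σ k} ∘ Tᵏ` of `Φ₀ⁿ⁻¹` is at most `∏ₖ (φ_{σ k}(Tᵏx₀) + ε)`, and these sum
to `(1 + |Φ|ε)ⁿ`; so `H̃_n(Φ|Ψ) ≤ N(𝒰₀ⁿ⁻¹|𝒱₀ⁿ⁻¹) (1 + |Φ|ε)ⁿ`.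

For `h* ≤ h̃*`: given `Ψ`, cover `X` by the open sets `V_S` where `ψ_j > 0` for `j ∈ S` and
`ψ_j < ε` for `j ∉ S`; given `𝒰` with Lebesgue number `δ`, take `Φ` whose supports have
diameter `< δ`. On a cell `V` of `𝒱₀ⁿ⁻¹` the members of `Ψ₀ⁿ⁻¹` positive on all of `V` have
total weight `≥ (1 - |Ψ|ε)ⁿ`, and for each such `ψ` a maximal subset of `supp ψ` on which no
member of `Φ₀ⁿ⁻¹` is nonzero twice both spans `supp ψ` for `𝒰₀ⁿ⁻¹` and has at most
`H̃(Φ₀ⁿ⁻¹|ψ)` points; so `N(𝒰₀ⁿ⁻¹|V) (1 - |Ψ|ε)ⁿ ≤ H̃_n(Φ|Ψ)`.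
-/

open Metric

namespace Real

variable {S : Set X} {f : X → ℝ}

lemma biSup_nonneg (hf : ∀ x, 0 ≤ f x) : 0 ≤ ⨆ x ∈ S, f x :=
  Real.iSup_nonneg fun x => Real.iSup_nonneg fun _ => hf x

lemma biSup_le {C : ℝ} (hC : 0 ≤ C) (hf : ∀ x ∈ S, f x ≤ C) : ⨆ x ∈ S, f x ≤ C :=
  Real.iSup_le (fun x => Real.iSup_le (hf x) hC) hC

lemma le_biSup {C : ℝ} (hf : ∀ x, f x ≤ C) {x : X} (hx : x ∈ S) : f x ≤ ⨆ y ∈ S, f y := by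
  have hbdd : BddAbove (Set.range fun y => ⨆ _ : y ∈ S, f y) :=
    ⟨max C 0, by
      rintro _ ⟨y, rfl⟩
      exact Real.iSup_le (fun _ => (hf y).trans (le_max_left _ _)) (le_max_right _ _)⟩
  exact (le_ciSup (f := fun _ : x ∈ S => f x) (Set.finite_range _).bddAbove hx).trans
    (le_ciSup hbdd x)

end Real

/-- The bounds `1 ≤ u`, `1 ≤ v ≤ Lⁿ` make both `limsup`s genuine: in `ℝ`, `limsup` of a sequence
that is not bounded above is a junk value. -/
lemma limsup_log_div_le_add_log {u v : ℕ → ℝ} {L c : ℝ} (hu : ∀ n, 1 ≤ u n) (hv : ∀ n, 1 ≤ v n)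
    (hvL : ∀ n, v n ≤ L ^ n) (hc : 0 < c) (huv : ∀ n, u n ≤ v n * c ^ n) :
    atTop.limsup (fun n : ℕ => Real.log (u n) / n) ≤
      atTop.limsup (fun n : ℕ => Real.log (v n) / n) + Real.log c := by
  have hv_le : ∀ᶠ n : ℕ in atTop, Real.log (v n) / n ≤ Real.log L := by
    filter_upwards [eventually_ge_atTop 1] with n hn
    have hn' : (0 : ℝ) < n := by exact_mod_cast hn
    rw [div_le_iff₀ hn', mul_comm, ← Real.log_pow]
    exact Real.log_le_log (by linarith [hv n]) (hvL n)
  have hv_bdd := isBoundedUnder_of_eventually_le hv_le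
  have hv_cobdd : IsCoboundedUnder (· ≤ ·) atTop fun n : ℕ => Real.log (v n) / n :=
    isCoboundedUnder_le_of_le atTop fun n => div_nonneg (Real.log_nonneg (hv n)) n.cast_nonneg
  have hu_cobdd : IsCoboundedUnder (· ≤ ·) atTop fun n : ℕ => Real.log (u n) / n :=
    isCoboundedUnder_le_of_le atTop fun n => div_nonneg (Real.log_nonneg (hu n)) n.cast_nonneg
  rw [← limsup_add_const atTop _ _ hv_bdd hv_cobdd]
  refine limsup_le_limsup ?_ hu_cobdd
    (isBoundedUnder_of_eventually_le (hv_le.mono fun n hn => add_le_add_left hn (Real.log c)))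
  filter_upwards [eventually_ge_atTop 1] with n hn
  have hn' : (0 : ℝ) < n := by exact_mod_cast hn
  have hlog : Real.log (u n) ≤ Real.log (v n) + n * Real.log c := by
    rw [← Real.log_pow, ← Real.log_mul (by linarith [hv n]) (pow_pos hc n).ne']
    exact Real.log_le_log (by linarith [hu n]) (huv n)
  rw [div_add' _ _ _ hn'.ne', div_le_div_iff_of_pos_right hn']
  linarith

lemma EReal.iInf_iSup_coe_le {ι κ : Sort*} {α : ι → Sort*} {β : κ → Sort*}
    {f : ∀ i, α i → ℝ} {g : ∀ j, β j → ℝ}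
    (h : ∀ j, ∀ η > 0, ∃ i, ∀ a, ∃ b, f i a ≤ g j b + η) :
    ⨅ i, ⨆ a, (f i a : EReal) ≤ ⨅ j, ⨆ b, (g j b : EReal) := by
  refine le_iInf fun j => EReal.le_of_forall_lt_iff_le.1 fun z hz => ?_
  obtain ⟨w, hGw, hwz⟩ := EReal.lt_iff_exists_real_btwn.1 hz
  obtain ⟨i, hi⟩ := h j (z - w) (_root_.sub_pos.2 (EReal.coe_lt_coe_iff.1 hwz))
  refine (iInf_le _ i).trans (iSup_le fun a => ?_)
  obtain ⟨b, hb⟩ := hi a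
  have hgw : g j b < w :=
    EReal.coe_lt_coe_iff.1 ((le_iSup (fun b => (g j b : EReal)) b).trans_lt hGw)
  exact EReal.coe_le_coe_iff.2 (by linarith)

namespace PartUnity

lemma exists_ne_zero (Φ : PartUnity X) (x : X) : ∃ i, Φ.f i x ≠ 0 := by
  obtain ⟨i, -, hi⟩ := Finset.exists_ne_zero_of_sum_ne_zero (Φ.sum_one x ▸ one_ne_zero)
  exact ⟨i, hi⟩

lemma n_pos [Nonempty X] (Φ : PartUnity X) : 0 < Φ.n :=
  Fin.pos_iff_nonempty.2 ⟨(Φ.exists_ne_zero (Classical.arbitrary X)).choose⟩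

lemma exists_dist_lt_imp_le_add [PseudoMetricSpace X] [CompactSpace X] {Φ : PartUnity X}
    (hΦ : Φ.Cont) {ε : ℝ} (hε : 0 < ε) :
    ∃ δ > 0, ∀ i x y, dist x y < δ → Φ.f i x ≤ Φ.f i y + ε := by
  obtain ⟨δ, hδ, h⟩ := Metric.uniformContinuous_iff.1
    (CompactSpace.uniformContinuous_of_continuous (continuous_pi fun i => hΦ i)) ε hε
  refine ⟨δ, hδ, fun i x y hxy => ?_⟩
  have := (dist_le_pi_dist (fun i => Φ.f i x) (fun i => Φ.f i y) i).trans_lt (h hxy)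
  rw [Real.dist_eq, abs_lt] at this
  linarith

variable (T : X → X) (Φ : PartUnity X)

def dynEquiv : ∀ n : ℕ, (Fin n → Fin Φ.n) ≃ Fin (dyn T Φ n).n
  | 0 => Equiv.ofUnique (Fin 0 → Fin Φ.n) (Fin 1)
  | n + 1 => ((Fin.consEquiv fun _ => Fin Φ.n).symm.trans
      ((Equiv.refl (Fin Φ.n)).prodCongr (dynEquiv n))).trans finProdFinEquiv

lemma dyn_f_dynEquiv : ∀ (n : ℕ) (σ : Fin n → Fin Φ.n) (x : X),
    (dyn T Φ n).f (dynEquiv T Φ n σ) x = ∏ k : Fin n, Φ.f (σ k) (T^[k] x)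
  | 0, σ, x => by simp [dyn, triv]
  | n + 1, σ, x => by
    have hidx : finProdFinEquiv.symm (dynEquiv T Φ (n + 1) σ) =
        (σ 0, dynEquiv T Φ n fun k => σ k.succ) :=
      Equiv.symm_apply_apply _ _
    change Φ.f (finProdFinEquiv.symm (dynEquiv T Φ (n + 1) σ)).1 x *
      (dyn T Φ n).f (finProdFinEquiv.symm (dynEquiv T Φ (n + 1) σ)).2 (T x) = _
    rw [hidx, dyn_f_dynEquiv n, Fin.prod_univ_succ]
    simp only [Fin.val_zero, Function.iterate_zero, id_eq, Fin.val_succ,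
      Function.iterate_succ_apply]

lemma dyn_n (n : ℕ) : (dyn T Φ n).n = Φ.n ^ n := by
  simpa using (Fintype.card_congr (dynEquiv T Φ n)).symm

lemma dyn_f_dynEquiv_ne_zero_iff {n : ℕ} {σ : Fin n → Fin Φ.n} {x : X} :
    (dyn T Φ n).f (dynEquiv T Φ n σ) x ≠ 0 ↔ ∀ k : Fin n, Φ.f (σ k) (T^[k] x) ≠ 0 := by
  simp [dyn_f_dynEquiv, Finset.prod_ne_zero_iff]

lemma tsupport_dyn_subset [TopologicalSpace X] {T : X → X} (hT : Continuous T) (n : ℕ)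
    (σ : Fin n → Fin Φ.n) :
    tsupport ((dyn T Φ n).f (dynEquiv T Φ n σ)) ⊆ ⋂ k : Fin n, T^[k] ⁻¹' tsupport (Φ.f (σ k)) :=
  closure_minimal
    (fun _ hx => Set.mem_iInter.2 fun k =>
      subset_tsupport _ ((dyn_f_dynEquiv_ne_zero_iff T Φ).1 hx k))
    (isClosed_iInter fun _ => (isClosed_tsupport _).preimage (hT.iterate _))

end PartUnity

open PartUnity (dyn dynEquiv)

namespace FinOpenCover

section TopologicalSpace

variable [TopologicalSpace X]

lemma nonempty_index [Nonempty X] (C : FinOpenCover X) : Nonempty (Fin C.n) := by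
  obtain ⟨i, -⟩ := Set.mem_iUnion.1 (C.cov ▸ Set.mem_univ (Classical.arbitrary X))
  exact ⟨i⟩

lemma exists_of_finite {ι : Type*} [Finite ι] (U : ι → Set X) (hU : ∀ i, IsOpen (U i))
    (hcov : ⋃ i, U i = Set.univ) : ∃ C : FinOpenCover X, ∀ u, ∃ i, C.U u = U i :=
  ⟨⟨Nat.card ι, fun u => U ((Finite.equivFin ι).symm u), fun _ => hU _,
    ((Finite.equivFin ι).symm.surjective.iUnion_comp U).trans hcov⟩, fun _ => ⟨_, rfl⟩⟩

lemma exists_partUnity_subordinate [NormalSpace X] [ParacompactSpace X] (C : FinOpenCover X) :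
    ∃ Ψ : PartUnity X, Ψ.Cont ∧ ∀ j, ∃ v, tsupport (Ψ.f j) ⊆ C.U v := by
  obtain ⟨p, hp⟩ := PartitionOfUnity.exists_isSubordinate isClosed_univ C.U C.opn C.cov.ge
  refine ⟨⟨C.n, fun i x => p i x, p.nonneg, p.le_one, fun x => ?_⟩, fun i => (p i).continuous,
    fun j => ⟨j, hp j⟩⟩
  simpa [finsum_eq_sum_of_fintype] using p.sum_eq_one (Set.mem_univ x)

end TopologicalSpace

lemma exists_diam_lt [PseudoMetricSpace X] [CompactSpace X] {δ : ℝ} (hδ : 0 < δ) :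
    ∃ C : FinOpenCover X, ∀ u, diam (C.U u) < δ := by
  obtain ⟨t, -, htfin, ht⟩ := finite_cover_balls_of_compact
    (isCompact_univ : IsCompact (Set.univ : Set X)) (by positivity : 0 < δ / 3)
  have := htfin.to_subtype
  obtain ⟨C, hC⟩ := exists_of_finite (fun c : t => ball (c : X) (δ / 3)) (fun _ => isOpen_ball)
    (Set.eq_univ_of_forall fun x => by simpa using ht (Set.mem_univ x))
  refine ⟨C, fun u => ?_⟩
  obtain ⟨c, hc⟩ := hC u
  rw [hc]
  exact (diam_ball (by positivity)).trans_lt (by linarith)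

end FinOpenCover

section CoverNum

variable {α : Type*} [Fintype α] {V : α → Set X} {S S' : Set X}

lemma coverNum_le_card {t : Finset α} (h : S ⊆ ⋃ i ∈ t, V i) : coverNum V S ≤ t.card :=
  Nat.sInf_le ⟨t, rfl, h⟩

lemma exists_card_eq_coverNum (h : S ⊆ ⋃ i, V i) :
    ∃ t : Finset α, t.card = coverNum V S ∧ S ⊆ ⋃ i ∈ t, V i :=
  Nat.sInf_mem (s := {k | ∃ t : Finset α, t.card = k ∧ S ⊆ ⋃ i ∈ t, V i})
    ⟨_, Finset.univ, rfl, by simpa using h⟩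

lemma coverNum_mono (hS : S ⊆ S') (h : S' ⊆ ⋃ i, V i) : coverNum V S ≤ coverNum V S' := by
  obtain ⟨t, ht, hcov⟩ := exists_card_eq_coverNum h
  exact ht ▸ coverNum_le_card (hS.trans hcov)

lemma one_le_coverNum (hS : S.Nonempty) (h : S ⊆ ⋃ i, V i) : 1 ≤ coverNum V S := by
  obtain ⟨t, ht, hcov⟩ := exists_card_eq_coverNum h
  obtain ⟨i, hi, -⟩ := Set.mem_iUnion₂.1 (hcov hS.some_mem)
  exact ht ▸ Finset.card_pos.2 ⟨i, hi⟩

end CoverNum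

section CondCoverNum

variable [TopologicalSpace X] (T : X → X) (CU CV : FinOpenCover X)

lemma iUnion_dynSet (C : FinOpenCover X) (n : ℕ) : ⋃ σ, dynSet T C.U n σ = Set.univ := by
  refine Set.eq_univ_of_forall fun x => ?_
  choose σ hσ using fun k : Fin n => Set.mem_iUnion.1 (C.cov ▸ Set.mem_univ (T^[k] x))
  exact Set.mem_iUnion.2 ⟨σ, Set.mem_iInter.2 hσ⟩

noncomputable def condCoverNum (n : ℕ) : ℕ :=
  ⨆ τ : Fin n → Fin CV.n, coverNum (fun σ : Fin n → Fin CU.n => dynSet T CU.U n σ)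
    (dynSet T CV.U n τ)

lemma misCondLoc_eq :
    misCondLoc T CU CV = atTop.limsup fun n : ℕ => Real.log (condCoverNum T CU CV n) / n :=
  rfl

lemma coverNum_le_condCoverNum {n : ℕ} (τ : Fin n → Fin CV.n) :
    coverNum (fun σ : Fin n → Fin CU.n => dynSet T CU.U n σ) (dynSet T CV.U n τ) ≤
      condCoverNum T CU CV n :=
  le_ciSup (f := fun τ : Fin n → Fin CV.n =>
    coverNum (fun σ : Fin n → Fin CU.n => dynSet T CU.U n σ) (dynSet T CV.U n τ))
    (Set.finite_range _).bddAbove τ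

lemma exists_coverNum_eq_condCoverNum [Nonempty X] (n : ℕ) :
    ∃ τ : Fin n → Fin CV.n,
      coverNum (fun σ : Fin n → Fin CU.n => dynSet T CU.U n σ) (dynSet T CV.U n τ) =
        condCoverNum T CU CV n :=
  have := CV.nonempty_index
  exists_eq_ciSup_of_finite

lemma one_le_condCoverNum [Nonempty X] (n : ℕ) : 1 ≤ condCoverNum T CU CV n := by
  obtain ⟨τ, hτ⟩ := Set.mem_iUnion.1 ((iUnion_dynSet T CV n).symm ▸
    Set.mem_univ (Classical.arbitrary X))
  exact (one_le_coverNum ⟨_, hτ⟩ ((Set.subset_univ _).trans (iUnion_dynSet T CU n).ge)).trans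
    (coverNum_le_condCoverNum T CU CV τ)

lemma condCoverNum_le_pow (n : ℕ) : condCoverNum T CU CV n ≤ CU.n ^ n :=
  ciSup_le' fun _ => (coverNum_le_card (t := Finset.univ) (by
    simpa using (Set.subset_univ _).trans (iUnion_dynSet T CU n).ge)).trans (by simp)

end CondCoverNum

section TailStat

lemma eval_mem_weights (Ψ : PartUnity X) (x : X) : (fun j => Ψ.f j x) ∈ weights Ψ :=
  ⟨fun j => ⟨ciInf_le ⟨0, by rintro _ ⟨y, rfl⟩; exact Ψ.nonneg j y⟩ x,
    le_ciSup ⟨1, by rintro _ ⟨y, rfl⟩; exact Ψ.le_one j y⟩ x⟩, Ψ.sum_one x⟩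

lemma sum_mul_le_of_mem_weights {Ψ : PartUnity X} {a : Fin Ψ.n → ℝ} (ha : a ∈ weights Ψ)
    {h : Fin Ψ.n → ℝ} {C : ℝ} (hC : ∀ j, h j ≤ C) : ∑ j, a j * h j ≤ C := by
  have ha0 : ∀ j, 0 ≤ a j := fun j =>
    (Real.iInf_nonneg fun x => Ψ.nonneg j x).trans (ha.1 j).1
  calc ∑ j, a j * h j ≤ ∑ j, a j * C :=
        Finset.sum_le_sum fun j _ => mul_le_mul_of_nonneg_left (hC j) (ha0 j)
    _ = C := by rw [← Finset.sum_mul, ha.2, one_mul]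

variable [TopologicalSpace X]

lemma condTopStatPU_nonneg (Φ : PartUnity X) (ψ : X → ℝ) : 0 ≤ condTopStatPU Φ ψ :=
  Finset.sum_nonneg fun i _ => Real.biSup_nonneg (Φ.nonneg i)

lemma condTopStatPU_le_n (Φ : PartUnity X) (ψ : X → ℝ) : condTopStatPU Φ ψ ≤ Φ.n := by
  unfold condTopStatPU
  calc ∑ i, ⨆ x ∈ tsupport ψ, Φ.f i x ≤ ∑ _i : Fin Φ.n, (1 : ℝ) :=
        Finset.sum_le_sum fun i _ => Real.biSup_le zero_le_one fun x _ => Φ.le_one i x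
    _ = Φ.n := by simp

lemma one_le_condTopStatPU (Φ : PartUnity X) {ψ : X → ℝ} {x : X} (hx : x ∈ tsupport ψ) :
    1 ≤ condTopStatPU Φ ψ :=
  Φ.sum_one x ▸ Finset.sum_le_sum fun i _ => Real.le_biSup (Φ.le_one i) hx

variable (T : X → X) (Φ Ψ : PartUnity X) (n : ℕ)

lemma tailStat_le {C : ℝ} (hC : 0 ≤ C)
    (h : ∀ j, condTopStatPU (dyn T Φ n) ((dyn T Ψ n).f j) ≤ C) : tailStat T Φ Ψ n ≤ C :=
  Real.sSup_le (by rintro _ ⟨a, ha, rfl⟩; exact sum_mul_le_of_mem_weights ha h) hC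

lemma tailStat_le_pow : tailStat T Φ Ψ n ≤ Φ.n ^ n := by
  simpa [PartUnity.dyn_n] using
    tailStat_le T Φ Ψ n (Nat.cast_nonneg _) fun j => condTopStatPU_le_n _ _

lemma sum_mul_condTopStatPU_le_tailStat (x : X) :
    ∑ j, (dyn T Ψ n).f j x * condTopStatPU (dyn T Φ n) ((dyn T Ψ n).f j) ≤ tailStat T Φ Ψ n :=
  le_csSup ⟨_, by rintro _ ⟨a, ha, rfl⟩; exact sum_mul_le_of_mem_weights ha fun j =>
      condTopStatPU_le_n (dyn T Φ n) ((dyn T Ψ n).f j)⟩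
    ⟨_, eval_mem_weights _ x, rfl⟩

lemma one_le_tailStat [Nonempty X] : 1 ≤ tailStat T Φ Ψ n := by
  let x := Classical.arbitrary X
  refine le_trans ?_ (sum_mul_condTopStatPU_le_tailStat T Φ Ψ n x)
  refine (dyn T Ψ n).sum_one x ▸ Finset.sum_le_sum fun j _ => ?_
  by_cases hj : (dyn T Ψ n).f j x = 0
  · simp [hj]
  · exact le_mul_of_one_le_right ((dyn T Ψ n).nonneg j x)
      (one_le_condTopStatPU _ (subset_tsupport _ hj))

end TailStat

namespace PartUnity

variable (Φ : PartUnity X)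

def Separates (E : Finset X) : Prop :=
  ∀ i, ∀ y ∈ E, ∀ z ∈ E, Φ.f i y ≠ 0 → Φ.f i z ≠ 0 → y = z

variable {Φ}

lemma Separates.card_le {E : Finset X} (hE : Φ.Separates E) : E.card ≤ Φ.n := by
  choose i hi using Φ.exists_ne_zero
  simpa using Finset.card_le_card_of_injOn i (t := Finset.univ) (fun _ _ => Finset.mem_coe.2
    (Finset.mem_univ _)) fun y hy z hz hyz => hE (i y) y hy z hz (hi y) (hyz ▸ hi z)

lemma Separates.card_le_sum_iSup {E : Finset X} (hE : Φ.Separates E) {A : Set X}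
    (hEA : ↑E ⊆ A) : (E.card : ℝ) ≤ ∑ i, ⨆ x ∈ A, Φ.f i x := by
  calc (E.card : ℝ) = ∑ i, ∑ y ∈ E, Φ.f i y := by
        simp [Finset.sum_comm (s := Finset.univ), Φ.sum_one]
    _ ≤ _ := Finset.sum_le_sum fun i _ => ?_
  by_cases hne : ∃ y ∈ E, Φ.f i y ≠ 0
  · obtain ⟨y₀, hy₀, h₀⟩ := hne
    rw [Finset.sum_eq_single_of_mem y₀ hy₀ fun y hy hyy₀ =>
      not_not.1 fun hy' => hyy₀ (hE i y hy y₀ hy₀ hy' h₀)]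
    exact Real.le_biSup (Φ.le_one i) (hEA hy₀)
  · rw [Finset.sum_eq_zero fun y hy => not_not.1 fun h => hne ⟨y, hy, h⟩]
    exact Real.biSup_nonneg (Φ.nonneg i)

variable (Φ)

lemma exists_separates_maximal (A : Set X) :
    ∃ E : Finset X, ↑E ⊆ A ∧ Φ.Separates E ∧
      ∀ x ∈ A, ∃ y ∈ E, ∃ i, Φ.f i x ≠ 0 ∧ Φ.f i y ≠ 0 := by
  classical
  set K := {k | ∃ E : Finset X, ↑E ⊆ A ∧ Φ.Separates E ∧ E.card = k}
  have hK : BddAbove K := ⟨Φ.n, by rintro _ ⟨E, -, hE, rfl⟩; exact hE.card_le⟩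
  obtain ⟨E, hEA, hE, hcard⟩ :=
    Nat.sSup_mem (s := K) ⟨0, ∅, by simp, by simp [Separates], rfl⟩ hK
  refine ⟨E, hEA, hE, fun x hx => ?_⟩
  by_contra! hfar
  have hxE : x ∉ E := fun hxE => by
    obtain ⟨i, hi⟩ := Φ.exists_ne_zero x
    exact hi (hfar x hxE i hi)
  have hsep : Φ.Separates (insert x E) := by
    intro i y hy z hz hyi hzi
    rcases Finset.mem_insert.1 hy with hyx | hy <;> rcases Finset.mem_insert.1 hz with hzx | hz
    · exact hyx.trans hzx.symm
    · exact absurd (hfar z hz i (hyx ▸ hyi)) hzi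
    · exact absurd (hfar y hy i (hzx ▸ hzi)) hyi
    · exact hE i y hy z hz hyi hzi
  have := le_csSup hK ⟨insert x E, by simpa [Set.insert_subset_iff] using ⟨hx, hEA⟩, hsep, rfl⟩
  rw [Finset.card_insert_of_notMem hxE, hcard] at this
  omega

lemma coverNum_le_sum_iSup {α : Type*} [Fintype α] {V : α → Set X}
    (hstar : ∀ y, ∃ a, ∀ x i, Φ.f i x ≠ 0 → Φ.f i y ≠ 0 → x ∈ V a) (A : Set X) :
    (coverNum V A : ℝ) ≤ ∑ i, ⨆ x ∈ A, Φ.f i x := by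
  classical
  choose a ha using hstar
  obtain ⟨E, hEA, hE, hmax⟩ := Φ.exists_separates_maximal A
  have hcov : A ⊆ ⋃ b ∈ E.image a, V b := fun x hx => by
    obtain ⟨y, hy, i, hxi, hyi⟩ := hmax x hx
    exact Set.mem_biUnion (Finset.mem_image_of_mem a hy) (ha y x i hxi hyi)
  calc (coverNum V A : ℝ) ≤ E.card := by
        exact_mod_cast (coverNum_le_card hcov).trans Finset.card_image_le
    _ ≤ _ := hE.card_le_sum_iSup hEA

lemma condTopStatPU_le_sum_of_subset_biUnion [TopologicalSpace X] {ψ : X → ℝ} {α : Type*}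
    {W : α → Set X} {t : Finset α} (h : tsupport ψ ⊆ ⋃ a ∈ t, W a) :
    condTopStatPU Φ ψ ≤ ∑ a ∈ t, ∑ i, ⨆ x ∈ W a, Φ.f i x := by
  rw [Finset.sum_comm]
  refine Finset.sum_le_sum fun i _ => Real.biSup_le
    (Finset.sum_nonneg fun a _ => Real.biSup_nonneg (Φ.nonneg i)) fun x hx => ?_
  obtain ⟨a, ha, hxa⟩ := Set.mem_iUnion₂.1 (h hx)
  exact (Real.le_biSup (Φ.le_one i) hxa).trans (Finset.single_le_sum
    (f := fun a => ⨆ x ∈ W a, Φ.f i x) (fun a _ => Real.biSup_nonneg (Φ.nonneg i)) ha)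

variable (T : X → X)

lemma sum_iSup_dyn_le_pow {n : ℕ} {ε : ℝ} (hε : 0 ≤ ε) {W : Set X}
    (hosc : ∀ x ∈ W, ∀ y ∈ W, ∀ (k : Fin n) i, Φ.f i (T^[k] x) ≤ Φ.f i (T^[k] y) + ε) :
    ∑ i, ⨆ x ∈ W, (dyn T Φ n).f i x ≤ (1 + Φ.n * ε) ^ n := by
  rcases W.eq_empty_or_nonempty with rfl | ⟨y, hy⟩
  · exact (Finset.sum_nonpos fun i _ => Real.biSup_le le_rfl fun x hx => hx.elim).trans
      (by positivity)
  calc ∑ i, ⨆ x ∈ W, (dyn T Φ n).f i x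
      = ∑ σ, ⨆ x ∈ W, (dyn T Φ n).f (dynEquiv T Φ n σ) x := (Equiv.sum_comp _ _).symm
    _ ≤ ∑ σ : Fin n → Fin Φ.n, ∏ k, (Φ.f (σ k) (T^[k] y) + ε) :=
        Finset.sum_le_sum fun σ _ => Real.biSup_le
          (Finset.prod_nonneg fun k _ => add_nonneg (Φ.nonneg _ _) hε) fun x hx => by
            rw [dyn_f_dynEquiv]
            exact Finset.prod_le_prod (fun k _ => Φ.nonneg _ _) fun k _ => hosc x hx y hy k _
    _ = ∏ k : Fin n, ∑ i, (Φ.f i (T^[k] y) + ε) :=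
        (Fintype.prod_sum fun (k : Fin n) (i : Fin Φ.n) => Φ.f i (T^[k] y) + ε).symm
    _ = (1 + Φ.n * ε) ^ n := by simp [Finset.sum_add_distrib, Φ.sum_one]

end PartUnity

lemma tailStat_le_condCoverNum_mul [TopologicalSpace X] {T : X → X} (hT : Continuous T)
    {Φ Ψ : PartUnity X} {CU CV : FinOpenCover X} {ε : ℝ} (hε : 0 ≤ ε)
    (hΨ : ∀ j, ∃ v, tsupport (Ψ.f j) ⊆ CV.U v)
    (hΦ : ∀ u, ∀ y ∈ CU.U u, ∀ z ∈ CU.U u, ∀ i, Φ.f i y ≤ Φ.f i z + ε) (n : ℕ) :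
    tailStat T Φ Ψ n ≤ condCoverNum T CU CV n * (1 + Φ.n * ε) ^ n := by
  choose c hc using hΨ
  refine tailStat_le T Φ Ψ n (by positivity) fun j => ?_
  obtain ⟨σ, rfl⟩ := (dynEquiv T Ψ n).surjective j
  have hsupp : tsupport ((dyn T Ψ n).f (dynEquiv T Ψ n σ)) ⊆ dynSet T CV.U n (c ∘ σ) :=
    (Ψ.tsupport_dyn_subset hT n σ).trans
      (Set.iInter_mono fun k => Set.preimage_mono (hc (σ k)))
  obtain ⟨t, ht, hcov⟩ := exists_card_eq_coverNum (S := dynSet T CV.U n (c ∘ σ))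
    ((Set.subset_univ _).trans (iUnion_dynSet T CU n).ge)
  calc condTopStatPU (dyn T Φ n) ((dyn T Ψ n).f (dynEquiv T Ψ n σ))
      ≤ ∑ σ' ∈ t, ∑ i, ⨆ x ∈ dynSet T CU.U n σ', (dyn T Φ n).f i x :=
        (dyn T Φ n).condTopStatPU_le_sum_of_subset_biUnion (hsupp.trans hcov)
    _ ≤ ∑ _σ' ∈ t, (1 + Φ.n * ε) ^ n := Finset.sum_le_sum fun σ' _ =>
        Φ.sum_iSup_dyn_le_pow T hε fun x hx y hy k i =>
          hΦ (σ' k) _ (Set.mem_iInter.1 hx k) _ (Set.mem_iInter.1 hy k) i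
    _ = t.card * (1 + Φ.n * ε) ^ n := by rw [Finset.sum_const, nsmul_eq_mul]
    _ ≤ condCoverNum T CU CV n * (1 + Φ.n * ε) ^ n := by
        gcongr
        exact_mod_cast ht ▸ coverNum_le_condCoverNum T CU CV _

section Compact

variable [MetricSpace X] [CompactSpace X] [Nonempty X]

lemma exists_tailLoc_le_misCondLoc_add {T : X → X} (hT : Continuous T) (CV : FinOpenCover X)
    {η : ℝ} (hη : 0 < η) :
    ∃ Ψ : {Ψ : PartUnity X // Ψ.Cont}, ∀ Φ : {Φ : PartUnity X // Φ.Cont},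
      ∃ CU : FinOpenCover X, tailLoc T Φ.1 Ψ.1 ≤ misCondLoc T CU CV + η := by
  obtain ⟨Ψ, hΨ, hsub⟩ := CV.exists_partUnity_subordinate
  refine ⟨⟨Ψ, hΨ⟩, fun ⟨Φ, hΦ⟩ => ?_⟩
  have hn : (0 : ℝ) < Φ.n := by exact_mod_cast Φ.n_pos
  set ε := (Real.exp η - 1) / Φ.n
  have hε : 0 < ε := div_pos (by linarith [Real.add_one_lt_exp hη.ne']) hn
  have hεη : 1 + Φ.n * ε = Real.exp η := by simp only [ε]; field_simp; ring
  obtain ⟨δ, hδ, hosc⟩ := PartUnity.exists_dist_lt_imp_le_add hΦ hε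
  obtain ⟨CU, hCU⟩ := FinOpenCover.exists_diam_lt (X := X) hδ
  refine ⟨CU, ?_⟩
  have hbound := tailStat_le_condCoverNum_mul hT hε.le hsub fun u y hy z hz i =>
    hosc i y z ((dist_le_diam_of_mem isBounded_of_compactSpace hy hz).trans_lt (hCU u))
  simp only [hεη] at hbound
  simpa [tailLoc, misCondLoc_eq, Real.log_exp] using limsup_log_div_le_add_log (L := CU.n)
    (fun n => one_le_tailStat T Φ Ψ n)
    (fun n => by exact_mod_cast one_le_condCoverNum T CU CV n)
    (fun n => by exact_mod_cast condCoverNum_le_pow T CU CV n) (Real.exp_pos η) hbound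

end Compact

namespace PartUnity

variable (Ψ : PartUnity X)

def profileSet (ε : ℝ) (S : Finset (Fin Ψ.n)) : Set X :=
  {x | (∀ j ∈ S, 0 < Ψ.f j x) ∧ ∀ j ∉ S, Ψ.f j x < ε}

lemma isOpen_profileSet [TopologicalSpace X] (hΨ : Ψ.Cont) (ε : ℝ)
    (S : Finset (Fin Ψ.n)) : IsOpen (Ψ.profileSet ε S) := by
  have : Ψ.profileSet ε S =
      (⋂ j ∈ S, Ψ.f j ⁻¹' Set.Ioi 0) ∩ ⋂ j ∈ Sᶜ, Ψ.f j ⁻¹' Set.Iio ε := by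
    ext
    simp [profileSet]
  rw [this]
  exact (isOpen_biInter_finset fun j _ => isOpen_Ioi.preimage (hΨ j)).inter
    (isOpen_biInter_finset fun j _ => isOpen_Iio.preimage (hΨ j))

lemma iUnion_profileSet {ε : ℝ} (hε : 0 < ε) : ⋃ S, Ψ.profileSet ε S = Set.univ := by
  classical
  refine Set.eq_univ_of_forall fun x =>
    Set.mem_iUnion.2 ⟨Finset.univ.filter fun j => ε ≤ Ψ.f j x, fun j hj => ?_, fun j hj => ?_⟩
  · linarith [(Finset.mem_filter.1 hj).2]
  · simpa using hj

lemma one_sub_le_sum_of_mem_profileSet {ε : ℝ} (hε : 0 ≤ ε) {S : Finset (Fin Ψ.n)} {x : X}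
    (hx : x ∈ Ψ.profileSet ε S) : 1 - Ψ.n * ε ≤ ∑ j ∈ S, Ψ.f j x := by
  have hcompl : ∑ j ∈ Sᶜ, Ψ.f j x ≤ Ψ.n * ε := by
    refine (Finset.sum_le_card_nsmul _ _ _ fun j hj =>
      (hx.2 j (Finset.mem_compl.1 hj)).le).trans ?_
    rw [nsmul_eq_mul]
    gcongr
    simpa using Finset.card_le_univ Sᶜ
  linarith [Finset.sum_add_sum_compl S fun j => Ψ.f j x, Ψ.sum_one x]

variable (T : X → X) {n : ℕ}

lemma one_sub_pow_le_sum_dyn {ε : ℝ} (hε : 0 ≤ ε) (hε1 : Ψ.n * ε ≤ 1)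
    {S : Fin n → Finset (Fin Ψ.n)} {x : X} (hx : ∀ k : Fin n, T^[k] x ∈ Ψ.profileSet ε (S k)) :
    (1 - Ψ.n * ε) ^ n ≤ ∑ ρ ∈ Fintype.piFinset S, (dyn T Ψ n).f (dynEquiv T Ψ n ρ) x := by
  calc (1 - Ψ.n * ε) ^ n = ∏ _k : Fin n, (1 - Ψ.n * ε) := by simp
    _ ≤ ∏ k : Fin n, ∑ j ∈ S k, Ψ.f j (T^[k] x) := Finset.prod_le_prod (fun _ _ => by linarith)
        fun k _ => Ψ.one_sub_le_sum_of_mem_profileSet hε (hx k)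
    _ = _ := by simp only [Finset.prod_univ_sum, dyn_f_dynEquiv]

lemma coverNum_le_condTopStatPU_dyn [PseudoMetricSpace X] (Φ : PartUnity X) {δ : ℝ}
    (hΦ : ∀ i x y, Φ.f i x ≠ 0 → Φ.f i y ≠ 0 → dist x y < δ) {CU : FinOpenCover X}
    (hLeb : ∀ y, ∃ u, ball y δ ⊆ CU.U u) (ψ : X → ℝ) :
    (coverNum (fun σ : Fin n → Fin CU.n => dynSet T CU.U n σ) (tsupport ψ) : ℝ) ≤
      condTopStatPU (dyn T Φ n) ψ := by
  choose g hg using hLeb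
  refine (dyn T Φ n).coverNum_le_sum_iSup
    (fun y => ⟨fun k : Fin n => g (T^[k] y), fun x i hx hy => ?_⟩) _
  obtain ⟨ρ, rfl⟩ := (dynEquiv T Φ n).surjective i
  rw [dyn_f_dynEquiv_ne_zero_iff] at hx hy
  exact Set.mem_iInter.2 fun k => hg _ (mem_ball.2 (hΦ _ _ _ (hx k) (hy k)))

end PartUnity

lemma coverNum_mul_le_tailStat [PseudoMetricSpace X] [Nonempty X] {T : X → X} {Φ Ψ : PartUnity X}
    {CU CV : FinOpenCover X} {ε δ : ℝ} (hε : 0 ≤ ε) (hε1 : Ψ.n * ε ≤ 1)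
    (hV : ∀ v, ∃ S, CV.U v ⊆ Ψ.profileSet ε S)
    (hΦ : ∀ i x y, Φ.f i x ≠ 0 → Φ.f i y ≠ 0 → dist x y < δ)
    (hLeb : ∀ y, ∃ u, ball y δ ⊆ CU.U u) {n : ℕ} (τ : Fin n → Fin CV.n) :
    coverNum (fun σ : Fin n → Fin CU.n => dynSet T CU.U n σ) (dynSet T CV.U n τ) *
      (1 - Ψ.n * ε) ^ n ≤ tailStat T Φ Ψ n := by
  choose S hS using hV
  set W := dynSet T CV.U n τ
  set M := coverNum (fun σ : Fin n → Fin CU.n => dynSet T CU.U n σ) W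
  rcases W.eq_empty_or_nonempty with hW | ⟨x, hx⟩
  · have hM : M = 0 := Nat.le_zero.1 (coverNum_le_card (t := ∅) (by simp [hW]))
    simpa [hM] using zero_le_one.trans (one_le_tailStat T Φ Ψ n)
  have hxk : ∀ k : Fin n, T^[k] x ∈ Ψ.profileSet ε (S (τ k)) := fun k =>
    hS _ (Set.mem_iInter.1 hx k)
  set G := Fintype.piFinset fun k => S (τ k)
  set H := fun j => condTopStatPU (dyn T Φ n) ((dyn T Ψ n).f j)
  have hcount : ∀ ρ ∈ G, (M : ℝ) ≤ H (dynEquiv T Ψ n ρ) := fun ρ hρ => by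
    have hWsupp : W ⊆ tsupport ((dyn T Ψ n).f (dynEquiv T Ψ n ρ)) := fun y hy =>
      subset_tsupport _ ((Ψ.dyn_f_dynEquiv_ne_zero_iff T).2 fun k =>
        ((hS _ (Set.mem_iInter.1 hy k)).1 _ (Fintype.mem_piFinset.1 hρ k)).ne')
    exact (Nat.cast_le.2 (coverNum_mono hWsupp ((Set.subset_univ _).trans
      (iUnion_dynSet T CU n).ge))).trans (Φ.coverNum_le_condTopStatPU_dyn T hΦ hLeb _)
  calc (M : ℝ) * (1 - Ψ.n * ε) ^ n
      ≤ M * ∑ ρ ∈ G, (dyn T Ψ n).f (dynEquiv T Ψ n ρ) x := by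
        gcongr
        exact Ψ.one_sub_pow_le_sum_dyn T hε hε1 hxk
    _ ≤ ∑ ρ ∈ G, (dyn T Ψ n).f (dynEquiv T Ψ n ρ) x * H (dynEquiv T Ψ n ρ) := by
        rw [Finset.mul_sum]
        exact Finset.sum_le_sum fun ρ hρ => by
          rw [mul_comm]
          exact mul_le_mul_of_nonneg_left (hcount ρ hρ) ((dyn T Ψ n).nonneg _ _)
    _ ≤ ∑ ρ, (dyn T Ψ n).f (dynEquiv T Ψ n ρ) x * H (dynEquiv T Ψ n ρ) :=
        Finset.sum_le_sum_of_subset_of_nonneg (Finset.subset_univ _) fun ρ _ _ =>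
          mul_nonneg ((dyn T Ψ n).nonneg _ _) (condTopStatPU_nonneg _ _)
    _ = ∑ j, (dyn T Ψ n).f j x * H j :=
        Equiv.sum_comp (dynEquiv T Ψ n) fun j => (dyn T Ψ n).f j x * H j
    _ ≤ tailStat T Φ Ψ n := sum_mul_condTopStatPU_le_tailStat T Φ Ψ n x

section Compact

variable [MetricSpace X] [CompactSpace X] [Nonempty X]

lemma exists_misCondLoc_le_tailLoc_add (T : X → X) (Ψ : {Ψ : PartUnity X // Ψ.Cont}) {η : ℝ}
    (hη : 0 < η) :
    ∃ CV : FinOpenCover X, ∀ CU : FinOpenCover X,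
      ∃ Φ : {Φ : PartUnity X // Φ.Cont}, misCondLoc T CU CV ≤ tailLoc T Φ.1 Ψ.1 + η := by
  obtain ⟨Ψ, hΨ⟩ := Ψ
  have hn : (0 : ℝ) < Ψ.n := by exact_mod_cast Ψ.n_pos
  set ε := (1 - Real.exp (-η)) / Ψ.n
  have hε : 0 < ε := div_pos (by linarith [Real.exp_lt_one_iff.2 (neg_lt_zero.2 hη)]) hn
  have hεη : 1 - Ψ.n * ε = Real.exp (-η) := by simp only [ε]; field_simp; ring
  obtain ⟨CV, hCV⟩ := FinOpenCover.exists_of_finite (Ψ.profileSet ε)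
    (Ψ.isOpen_profileSet hΨ ε) (Ψ.iUnion_profileSet hε)
  refine ⟨CV, fun CU => ?_⟩
  obtain ⟨δ, hδ, hLeb⟩ := lebesgue_number_lemma_of_metric isCompact_univ CU.opn CU.cov.ge
  obtain ⟨C, hC⟩ := FinOpenCover.exists_diam_lt (X := X) hδ
  obtain ⟨Φ, hΦ, hsub⟩ := C.exists_partUnity_subordinate
  refine ⟨⟨Φ, hΦ⟩, ?_⟩
  have hsmall : ∀ i x y, Φ.f i x ≠ 0 → Φ.f i y ≠ 0 → dist x y < δ := fun i x y hx hy => by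
    obtain ⟨u, hu⟩ := hsub i
    exact (dist_le_diam_of_mem isBounded_of_compactSpace (hu (subset_tsupport _ hx))
      (hu (subset_tsupport _ hy))).trans_lt (hC u)
  have hbound : ∀ n, (condCoverNum T CU CV n : ℝ) ≤ tailStat T Φ Ψ n * Real.exp η ^ n := by
    intro n
    obtain ⟨τ, hτ⟩ := exists_coverNum_eq_condCoverNum T CU CV n
    have := coverNum_mul_le_tailStat (T := T) hε.le (by linarith [Real.exp_pos (-η)])
      (fun v => (hCV v).imp fun _ h => h.le) hsmall (fun y => hLeb y (Set.mem_univ y)) τ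
    rwa [hτ, hεη, Real.exp_neg, inv_pow, ← div_eq_mul_inv, div_le_iff₀ (by positivity)] at this
  simpa [tailLoc, misCondLoc_eq, Real.log_exp] using limsup_log_div_le_add_log (L := Φ.n)
    (fun n => by exact_mod_cast one_le_condCoverNum T CU CV n) (fun n => one_le_tailStat T Φ Ψ n)
    (fun n => tailStat_le_pow T Φ Ψ n) (Real.exp_pos η) hbound

end Compact

theorem tailEntPU_eq_misTail_general {X : Type*} [MetricSpace X] [CompactSpace X] [Nonempty X]
    (T : X → X) (hT : Continuous T) :
    tailEntPU T = misTail T := by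
  unfold tailEntPU condTopEntPU misTail misCond
  exact le_antisymm
    (EReal.iInf_iSup_coe_le fun CV _ hη => exists_tailLoc_le_misCondLoc_add hT CV hη)
    (EReal.iInf_iSup_coe_le fun Ψ _ hη => exists_misCondLoc_le_tailLoc_add T Ψ hη)

/-- `h̃*(T) = h*(T)`: the topological tail entropy via continuous
partitions of unity equals Misiurewicz's topological tail entropy. -/
theorem tailEntPU_eq_misTail {X : Type*} [MetricSpace X] [CompactSpace X] [Nonempty X]
    [MeasurableSpace X] [BorelSpace X]
    (T : X → X) (hT : Continuous T) (hTsurj : Function.Surjective T) :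
    tailEntPU T = misTail T :=
  tailEntPU_eq_misTail_general T hT
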